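/- Fix integers n ≥ 1 and k, and assume the abelian group H^{4k+1}(C) is torsion-free. Let a ∈ C^{2k} and b ∈ C^{2k+1} satisfy da = 2^n·b. Then db = 0, the reductions π_n(a·b) and π_n(2^{n−1}·(b ⌣₁ b)) are degree-(4k+1) cocycles of the quotient complex C/2^nC, and their cohomology classes in H^{4k+1}(C/2^nC) are equal. (This is the identity x ⌣ β(x) = Sq̃^{2k}(β(x)) of the main pairing identity, stated at the level of a differential graded ring with a commutativity homotopy; applied to the étale cochain ring of a smooth projective 2d-dimensional variety over a finite field it yields Theorem 4.3.) -/

import Mathlib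

/-!
Put `c = a·b − 2^(n−1)·(b ⌣₁ b)`. Since `d(a·b) = 2^n·b·b` and `d(b ⌣₁ b) = 2·b·b`, `c` is an
integral cocycle, and the cup-1 formula for `a ⌣₁ b` shows `2^(n+1)·c = d(a·a + 2^n·(a ⌣₁ b))`.
As `H^(4k+1)(C)` is torsion-free, `c` itself is a coboundary `d w`, so the two reductions mod `2^n`
differ by a coboundary.
-/

section CupOne

variable {A : Type*} [Ring A] (C : ℤ → AddSubgroup A) (d : A →+ A) (cup1 : A →+ A →+ A)

def LeibnizRule : Prop :=
  ∀ (r : ℤ), ∀ x ∈ C r, ∀ y : A, d (x * y) = d x * y + (Int.negOnePow r : ℤ) • (x * d y)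

def CupOneFormula : Prop :=
  ∀ (r s : ℤ), ∀ u ∈ C r, ∀ v ∈ C s,
    d (cup1 u v) = - cup1 (d u) v + (Int.negOnePow (1 + r) : ℤ) • cup1 u (d v)
      + u * v - (Int.negOnePow (r * s) : ℤ) • (v * u)

variable {C d cup1}

theorem d_eq_zero_of_d_eq_zsmul
    (hd : ∀ (j : ℤ), ∀ x ∈ C j, d x ∈ C (j + 1)) (hdd : ∀ x : A, d (d x) = 0)
    (htf : ∀ (j : ℤ), ∀ x ∈ C j, ∀ q : ℤ, q • x = 0 → q = 0 ∨ x = 0)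
    {j q : ℤ} (hq : q ≠ 0) {a b : A} (hb : b ∈ C j) (hda : d a = q • b) : d b = 0 :=
  (htf _ _ (hd j b hb) q (by rw [← map_zsmul, ← hda, hdd])).resolve_left hq

theorem LeibnizRule.d_mul_of_even (hleibniz : LeibnizRule C d) {r : ℤ} (hr : Even r) {x : A}
    (hx : x ∈ C r) (y : A) : d (x * y) = d x * y + x * d y := by
  rw [hleibniz r x hx y, Int.negOnePow_even r hr, Units.val_one, one_smul]

theorem CupOneFormula.d_cup1_of_even (hcup1 : CupOneFormula C d cup1) {r s : ℤ} (hr : Even r)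
    {u v : A} (hu : u ∈ C r) (hv : v ∈ C s) (hdv : d v = 0) :
    d (cup1 u v) = - cup1 (d u) v + u * v - v * u := by
  rw [hcup1 r s u hu v hv, hdv, Int.negOnePow_even _ (hr.mul_right s), Units.val_one, one_smul,
    map_zero, smul_zero, add_zero]

theorem CupOneFormula.d_cup1_self_of_odd (hcup1 : CupOneFormula C d cup1) {s : ℤ} (hs : Odd s)
    {v : A} (hv : v ∈ C s) (hdv : d v = 0) : d (cup1 v v) = (2 : ℤ) • (v * v) := by
  rw [hcup1 s s v hv v hv, hdv, Int.negOnePow_odd _ (hs.mul hs), Units.val_neg, Units.val_one,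
    map_zero, map_zero, AddMonoidHom.zero_apply, neg_zero, smul_zero, neg_one_smul, two_smul]
  abel

theorem d_mul_eq_zsmul_mul_self (hleibniz : LeibnizRule C d) {r q : ℤ} (hr : Even r) {a b : A}
    (ha : a ∈ C r) (hda : d a = q • b) (hdb : d b = 0) : d (a * b) = q • (b * b) := by
  rw [hleibniz.d_mul_of_even hr ha, hda, hdb, mul_zero, add_zero, smul_mul_assoc]

theorem d_zsmul_cup1_self (hcup1 : CupOneFormula C d cup1) {s : ℤ} (hs : Odd s) (m : ℤ)
    {b : A} (hb : b ∈ C s) (hdb : d b = 0) : d (m • cup1 b b) = (2 * m) • (b * b) := by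
  rw [map_zsmul, hcup1.d_cup1_self_of_odd hs hb hdb, smul_smul, mul_comm]

theorem zsmul_mul_sub_zsmul_cup1_self_eq_d (hleibniz : LeibnizRule C d)
    (hcup1 : CupOneFormula C d cup1) {r s m : ℤ} (hr : Even r) {a b : A} (ha : a ∈ C r)
    (hb : b ∈ C s) (hda : d a = (2 * m) • b) (hdb : d b = 0) :
    (2 * (2 * m)) • (a * b - m • cup1 b b) = d (a * a + (2 * m) • cup1 a b) := by
  rw [map_add, map_zsmul, hleibniz.d_mul_of_even hr ha, hcup1.d_cup1_of_even hr ha hb hdb,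
    hda, smul_mul_assoc, mul_smul_comm, map_zsmul, AddMonoidHom.smul_apply]
  module

end CupOne

theorem pairing_equals_generalized_steenrod_square_of_bockstein_general
    {A : Type*} [Ring A]
    (C : ℤ → AddSubgroup A)
    (d : A →+ A)
    (hd : ∀ (j : ℤ), ∀ x ∈ C j, d x ∈ C (j + 1))
    (hdd : ∀ x : A, d (d x) = 0)
    (hmul : ∀ (r s : ℤ), ∀ x ∈ C r, ∀ y ∈ C s, x * y ∈ C (r + s))
    (hleibniz : ∀ (r : ℤ), ∀ x ∈ C r, ∀ y : A,
      d (x * y) = d x * y + (Int.negOnePow r : ℤ) • (x * d y))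
    (cup1 : A →+ A →+ A)
    (hcup1_mem : ∀ (r s : ℤ), ∀ u ∈ C r, ∀ v ∈ C s, cup1 u v ∈ C (r + s - 1))
    (hcup1 : ∀ (r s : ℤ), ∀ u ∈ C r, ∀ v ∈ C s,
      d (cup1 u v) = - cup1 (d u) v + (Int.negOnePow (1 + r) : ℤ) • cup1 u (d v)
        + u * v - (Int.negOnePow (r * s) : ℤ) • (v * u))
    (htf : ∀ (j : ℤ), ∀ x ∈ C j, ∀ q : ℤ, q • x = 0 → q = 0 ∨ x = 0)
    (n : ℕ) (hn : 1 ≤ n) (k : ℤ)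
    (hH : ∀ x ∈ C (4 * k + 1), d x = 0 → ∀ q : ℤ, q ≠ 0 →
      (∃ w ∈ C (4 * k), q • x = d w) → ∃ w ∈ C (4 * k), x = d w)
    (a b : A) (ha : a ∈ C (2 * k)) (hb : b ∈ C (2 * k + 1))
    (hda : d a = (2 ^ n : ℤ) • b) :
    d b = 0 ∧
    (∃ y ∈ C (4 * k + 2), d (a * b) = (2 ^ n : ℤ) • y) ∧
    (∃ y ∈ C (4 * k + 2), d ((2 ^ (n - 1) : ℤ) • cup1 b b) = (2 ^ n : ℤ) • y) ∧
    (∃ w ∈ C (4 * k), ∃ t ∈ C (4 * k + 1),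
      a * b - (2 ^ (n - 1) : ℤ) • cup1 b b = d w + (2 ^ n : ℤ) • t) := by
  have h2m : (2 : ℤ) * 2 ^ (n - 1) = 2 ^ n := by rw [← pow_succ']; congr 1; omega
  have hdb : d b = 0 := d_eq_zero_of_d_eq_zsmul hd hdd htf (by positivity) hb hda
  rw [← h2m] at hda ⊢
  have hr : Even (2 * k) := even_two_mul k
  have hs : Odd (2 * k + 1) := odd_two_mul_add_one k
  have hbb : b * b ∈ C (4 * k + 2) := by convert hmul _ _ b hb b hb using 2; ring
  have hdab := d_mul_eq_zsmul_mul_self hleibniz hr ha hda hdb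
  have hdcbb := d_zsmul_cup1_self hcup1 hs (2 ^ (n - 1)) hb hdb
  refine ⟨hdb, ⟨b * b, hbb, hdab⟩, ⟨b * b, hbb, hdcbb⟩, ?_⟩
  have hc : a * b - (2 ^ (n - 1) : ℤ) • cup1 b b ∈ C (4 * k + 1) := by
    refine sub_mem ?_ (zsmul_mem ?_ _)
    · convert hmul _ _ a ha b hb using 2; ring
    · convert hcup1_mem _ _ b hb b hb using 2; ring
  have hw₀ : a * a + (2 * 2 ^ (n - 1) : ℤ) • cup1 a b ∈ C (4 * k) := by
    refine add_mem ?_ (zsmul_mem ?_ _)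
    · convert hmul _ _ a ha a ha using 2; ring
    · convert hcup1_mem _ _ a ha b hb using 2; ring
  obtain ⟨w, hw, hcw⟩ := hH _ hc (by rw [map_sub, hdab, hdcbb, sub_self]) _ (by positivity)
    ⟨_, hw₀, zsmul_mul_sub_zsmul_cup1_self_eq_d hleibniz hcup1 hr ha hb hda hdb⟩
  exact ⟨w, hw, 0, zero_mem _, by rw [smul_zero, add_zero, hcw]⟩

/-- The pairing identity `x ⌣ β(x) = Sq̃^(2k)(β(x))` at the level of a ℤ-graded
differential graded ring with a cup-1 commutativity homotopy, with torsion-free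
components and `H^(4k+1)(C)` torsion-free: given `a ∈ C^(2k)`, `b ∈ C^(2k+1)`
with `da = 2^n·b`, we have `db = 0`, the reductions mod `2^n` of `a·b` and of
`2^(n-1)·(b ⌣₁ b)` are cocycles of `C/2^nC`, and their classes in
`H^(4k+1)(C/2^nC)` agree. -/
theorem pairing_equals_generalized_steenrod_square_of_bockstein
    {A : Type*} [Ring A]
    (C : ℤ → AddSubgroup A)
    (d : A →+ A)
    (hd : ∀ (j : ℤ), ∀ x ∈ C j, d x ∈ C (j + 1))
    (hdd : ∀ x : A, d (d x) = 0)
    (hone : (1 : A) ∈ C 0)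
    (hmul : ∀ (r s : ℤ), ∀ x ∈ C r, ∀ y ∈ C s, x * y ∈ C (r + s))
    (hleibniz : ∀ (r : ℤ), ∀ x ∈ C r, ∀ y : A,
      d (x * y) = d x * y + (Int.negOnePow r : ℤ) • (x * d y))
    (cup1 : A →+ A →+ A)
    (hcup1_mem : ∀ (r s : ℤ), ∀ u ∈ C r, ∀ v ∈ C s, cup1 u v ∈ C (r + s - 1))
    (hcup1 : ∀ (r s : ℤ), ∀ u ∈ C r, ∀ v ∈ C s,
      d (cup1 u v) = - cup1 (d u) v + (Int.negOnePow (1 + r) : ℤ) • cup1 u (d v)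
        + u * v - (Int.negOnePow (r * s) : ℤ) • (v * u))
    (htf : ∀ (j : ℤ), ∀ x ∈ C j, ∀ q : ℤ, q • x = 0 → q = 0 ∨ x = 0)
    (n : ℕ) (hn : 1 ≤ n) (k : ℤ)
    (hH : ∀ x ∈ C (4 * k + 1), d x = 0 → ∀ q : ℤ, q ≠ 0 →
      (∃ w ∈ C (4 * k), q • x = d w) → ∃ w ∈ C (4 * k), x = d w)
    (a b : A) (ha : a ∈ C (2 * k)) (hb : b ∈ C (2 * k + 1))
    (hda : d a = (2 ^ n : ℤ) • b) :
    d b = 0 ∧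
    (∃ y ∈ C (4 * k + 2), d (a * b) = (2 ^ n : ℤ) • y) ∧
    (∃ y ∈ C (4 * k + 2), d ((2 ^ (n - 1) : ℤ) • cup1 b b) = (2 ^ n : ℤ) • y) ∧
    (∃ w ∈ C (4 * k), ∃ t ∈ C (4 * k + 1),
      a * b - (2 ^ (n - 1) : ℤ) • cup1 b b = d w + (2 ^ n : ℤ) • t) :=
  pairing_equals_generalized_steenrod_square_of_bockstein_general C d hd hdd hmul hleibniz cup1
    hcup1_mem hcup1 htf n hn k hH a b ha hb hda
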